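/- Fix real numbers T1 < T2, an integer k ≥ 1, and a vector μ ∈ ℝ^k with T1 = μ_0 < μ_1 < ⋯ < μ_k < μ_{k+1} = T2. Then for every s ∈ S_k and every a ∈ [0,1], D_c(s | k, μ) ≤ D_c(μ + a(s − μ) | k, μ), where μ + a(s − μ) ∈ S_k; i.e., the general Dirichlet depth is monotone relative to its deepest point μ. -/

import Mathlib

open MeasureTheory Filter Set

/-- Extended event sequence: `extSeq T1 T2 k s i` is `T1` for `i = 0`,
`s_(i)` for `1 ≤ i ≤ k` and `T2` for `i > k` (conventions `s_0 = T1`, `s_{k+1} = T2`). -/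
noncomputable def extSeq (T1 T2 : ℝ) (k : ℕ) (s : Fin k → ℝ) : ℕ → ℝ :=
  fun i => if h0 : i = 0 then T1 else if h : i ≤ k then s ⟨i - 1, by omega⟩ else T2

/-- The set of point-process realizations with `k` events on `[T1, T2]`:
ordered `k`-tuples `T1 ≤ s_1 ≤ ⋯ ≤ s_k ≤ T2`. -/
def Sk (T1 T2 : ℝ) (k : ℕ) : Set (Fin k → ℝ) :=
  {s | Monotone s ∧ (∀ i, T1 ≤ s i) ∧ (∀ i, s i ≤ T2)}

/-- The Dirichlet depth for a homogeneous Poisson process conditioned on `k` events. -/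
noncomputable def DcHPP (T1 T2 : ℝ) (k : ℕ) (s : Fin k → ℝ) : ℝ :=
  ((k : ℝ) + 1) * ∏ i ∈ Finset.range (k + 1),
    ((extSeq T1 T2 k s (i + 1) - extSeq T1 T2 k s i) / (T2 - T1)) ^ ((1 : ℝ) / ((k : ℝ) + 1))

/-- The general Dirichlet depth relative to a conditional mean vector `μ`. -/
noncomputable def DcGen (T1 T2 : ℝ) (k : ℕ) (μ : Fin k → ℝ) (s : Fin k → ℝ) : ℝ :=
  ∏ i ∈ Finset.range (k + 1),
    ((extSeq T1 T2 k s (i + 1) - extSeq T1 T2 k s i) /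
        (extSeq T1 T2 k μ (i + 1) - extSeq T1 T2 k μ i)) ^
      ((extSeq T1 T2 k μ (i + 1) - extSeq T1 T2 k μ i) / (T2 - T1))

/-- The time-rescaling-based Dirichlet depth relative to a cumulative intensity `Λ`. -/
noncomputable def DcTS (T1 T2 : ℝ) (k : ℕ) (Λ : ℝ → ℝ) (s : Fin k → ℝ) : ℝ :=
  ((k : ℝ) + 1) * ∏ i ∈ Finset.range (k + 1),
    ((Λ (extSeq T1 T2 k s (i + 1)) - Λ (extSeq T1 T2 k s i)) / Λ T2) ^ ((1 : ℝ) / ((k : ℝ) + 1))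

/-! The increments `dᵢ` of `s` and `mᵢ > 0` of `μ` both sum to `T2 - T1`, so with weights
`wᵢ = mᵢ / (T2 - T1)` and ratios `rᵢ = dᵢ / mᵢ` the depth is the weighted geometric mean
`G = ∏ rᵢ ^ wᵢ`, while `∑ wᵢ rᵢ = 1`. Moving `s` towards `μ` replaces `rᵢ` by `1 - a + a rᵢ`.
By AM-GM `G ≤ 1`, hence `G ≤ G ^ a = ∏ (rᵢ ^ a) ^ wᵢ`, and Bernoulli's inequality
`rᵢ ^ a ≤ 1 - a + a rᵢ` finishes the proof. -/

section WeightedMeans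

variable {ι : Type*} (t : Finset ι) (w r : ι → ℝ)

theorem prod_rpow_le_prod_one_sub_add_mul_rpow (hw : ∀ i ∈ t, 0 ≤ w i)
    (hw₁ : ∑ i ∈ t, w i = 1) (hr : ∀ i ∈ t, 0 ≤ r i) (hwr : ∑ i ∈ t, w i * r i ≤ 1)
    {a : ℝ} (ha₀ : 0 ≤ a) (ha₁ : a ≤ 1) :
    ∏ i ∈ t, r i ^ w i ≤ ∏ i ∈ t, (1 - a + a * r i) ^ w i := by
  have hG₀ : 0 ≤ ∏ i ∈ t, r i ^ w i := Finset.prod_nonneg fun i hi => Real.rpow_nonneg (hr i hi) _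
  have hG₁ : ∏ i ∈ t, r i ^ w i ≤ 1 :=
    (Real.geom_mean_le_arith_mean_weighted t w r hw hw₁ hr).trans hwr
  calc ∏ i ∈ t, r i ^ w i
      = (∏ i ∈ t, r i ^ w i) ^ (1 : ℝ) := (Real.rpow_one _).symm
    _ ≤ (∏ i ∈ t, r i ^ w i) ^ a := Real.rpow_le_rpow_of_exponent_ge' hG₀ hG₁ ha₀ ha₁
    _ = ∏ i ∈ t, (r i ^ a) ^ w i := by
      rw [← Real.finsetProd_rpow _ _ fun i hi => Real.rpow_nonneg (hr i hi) _]
      refine Finset.prod_congr rfl fun i hi => ?_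
      rw [← Real.rpow_mul (hr i hi), ← Real.rpow_mul (hr i hi), mul_comm]
    _ ≤ ∏ i ∈ t, (1 - a + a * r i) ^ w i := by
      refine Finset.prod_le_prod (fun i hi => Real.rpow_nonneg (Real.rpow_nonneg (hr i hi) a) _)
        fun i hi => ?_
      refine Real.rpow_le_rpow (Real.rpow_nonneg (hr i hi) a) ?_ (hw i hi)
      have := rpow_one_add_le_one_add_mul_self (by linarith [hr i hi] : -1 ≤ r i - 1) ha₀ ha₁
      rw [add_sub_cancel] at this
      linarith

theorem prod_div_rpow_le_prod_add_mul_sub_div_rpow (m d : ι → ℝ) {M : ℝ}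
    (hm : ∀ i ∈ t, 0 < m i) (hd : ∀ i ∈ t, 0 ≤ d i) (hM : 0 < M)
    (hsum_m : ∑ i ∈ t, m i = M) (hsum_d : ∑ i ∈ t, d i = M) {a : ℝ} (ha₀ : 0 ≤ a) (ha₁ : a ≤ 1) :
    ∏ i ∈ t, (d i / m i) ^ (m i / M) ≤ ∏ i ∈ t, ((m i + a * (d i - m i)) / m i) ^ (m i / M) := by
  have hratio : ∀ i ∈ t, (m i + a * (d i - m i)) / m i = 1 - a + a * (d i / m i) := by
    intro i hi
    field_simp [(hm i hi).ne']
    ring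
  rw [Finset.prod_congr rfl fun i hi => congrArg (· ^ (m i / M)) (hratio i hi)]
  refine prod_rpow_le_prod_one_sub_add_mul_rpow t _ _ (fun i hi => (div_pos (hm i hi) hM).le)
    ?_ (fun i hi => div_nonneg (hd i hi) (hm i hi).le) ?_ ha₀ ha₁
  · rw [← Finset.sum_div, hsum_m, div_self hM.ne']
  · rw [Finset.sum_congr rfl fun i hi => by
      rw [div_mul_div_comm, mul_comm (m i), mul_div_mul_right _ _ (hm i hi).ne'],
      ← Finset.sum_div, hsum_d, div_self hM.ne']

end WeightedMeans

section ExtendedSequence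

variable {T1 T2 : ℝ} {k : ℕ}

theorem extSeq_zero (s : Fin k → ℝ) : extSeq T1 T2 k s 0 = T1 := by
  simp [extSeq]

theorem extSeq_succ_of_lt {i : ℕ} (hi : i < k) (s : Fin k → ℝ) :
    extSeq T1 T2 k s (i + 1) = s ⟨i, hi⟩ := by
  simp [extSeq, Nat.succ_le_of_lt hi]

theorem extSeq_of_lt {i : ℕ} (hi : k < i) (s : Fin k → ℝ) : extSeq T1 T2 k s i = T2 := by
  simp [extSeq, Nat.ne_zero_of_lt hi, hi.not_ge]

theorem extSeq_add_mul_sub (μ s : Fin k → ℝ) (a : ℝ) (i : ℕ) :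
    extSeq T1 T2 k (fun j => μ j + a * (s j - μ j)) i
      = extSeq T1 T2 k μ i + a * (extSeq T1 T2 k s i - extSeq T1 T2 k μ i) := by
  unfold extSeq
  split_ifs <;> ring

theorem sum_range_extSeq_sub (s : Fin k → ℝ) :
    ∑ i ∈ Finset.range (k + 1), (extSeq T1 T2 k s (i + 1) - extSeq T1 T2 k s i) = T2 - T1 := by
  rw [Finset.sum_range_sub, extSeq_of_lt (Nat.lt_succ_self k), extSeq_zero]

theorem monotone_extSeq_iff (h : T1 ≤ T2) (s : Fin k → ℝ) :
    Monotone (extSeq T1 T2 k s) ↔ s ∈ Sk T1 T2 k := by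
  have hval : ∀ i : Fin k, extSeq T1 T2 k s (i + 1) = s i := fun i => extSeq_succ_of_lt i.isLt s
  constructor
  · intro hE
    refine ⟨fun i j hij => ?_, fun i => ?_, fun i => ?_⟩
    · simpa only [hval] using hE (Nat.succ_le_succ hij)
    · simpa only [extSeq_zero, hval] using hE (Nat.zero_le (i + 1))
    · simpa only [extSeq_of_lt (Nat.lt_succ_self k), hval] using hE (Nat.succ_le_succ i.isLt.le)
  · rintro ⟨hs_mono, hs_ge, hs_le⟩
    refine monotone_nat_of_le_succ fun i => ?_
    cases i with
    | zero =>
      rw [extSeq_zero]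
      rcases Nat.eq_zero_or_pos k with rfl | hk
      · rw [extSeq_of_lt Nat.zero_lt_one]; exact h
      · rw [extSeq_succ_of_lt hk]; exact hs_ge _
    | succ j =>
      rcases lt_trichotomy (j + 1) k with hj | hj | hj
      · rw [extSeq_succ_of_lt hj, extSeq_succ_of_lt (Nat.lt_of_succ_lt hj)]
        exact hs_mono (Nat.le_succ j)
      · rw [extSeq_succ_of_lt (hj ▸ Nat.lt_succ_self j), extSeq_of_lt (by omega)]
        exact hs_le _
      · rw [extSeq_of_lt hj, extSeq_of_lt (by omega)]

theorem monotone_extSeq_of_le_succ {s : Fin k → ℝ}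
    (hs : ∀ i ≤ k, extSeq T1 T2 k s i ≤ extSeq T1 T2 k s (i + 1)) :
    Monotone (extSeq T1 T2 k s) := by
  refine monotone_nat_of_le_succ fun i => ?_
  rcases le_or_gt i k with hi | hi
  · exact hs i hi
  · rw [extSeq_of_lt hi, extSeq_of_lt (hi.trans (Nat.lt_succ_self i))]

end ExtendedSequence

theorem convex_Sk (T1 T2 : ℝ) (k : ℕ) : Convex ℝ (Sk T1 T2 k) := by
  rintro x ⟨hx_mono, hx_ge, hx_le⟩ y ⟨hy_mono, hy_ge, hy_le⟩ a b ha hb hab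
  refine ⟨fun i j hij => ?_, fun i => ?_, fun i => ?_⟩
  · simp only [Pi.add_apply, Pi.smul_apply, smul_eq_mul]
    gcongr
    exacts [hx_mono hij, hy_mono hij]
  · calc T1 = a * T1 + b * T1 := by rw [← add_mul, hab, one_mul]
      _ ≤ a * x i + b * y i := by gcongr; exacts [hx_ge i, hy_ge i]
  · calc a * x i + b * y i ≤ a * T2 + b * T2 := by gcongr; exacts [hx_le i, hy_le i]
      _ = T2 := by rw [← add_mul, hab, one_mul]

theorem stmt11_general (T1 T2 : ℝ) (h : T1 < T2) (k : ℕ)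
    (μ : Fin k → ℝ)
    (hμ : ∀ i ≤ k, extSeq T1 T2 k μ i < extSeq T1 T2 k μ (i + 1)) :
    ∀ s ∈ Sk T1 T2 k, ∀ a ∈ Set.Icc (0 : ℝ) 1,
      (fun i => μ i + a * (s i - μ i)) ∈ Sk T1 T2 k ∧
      DcGen T1 T2 k μ s ≤ DcGen T1 T2 k μ (fun i => μ i + a * (s i - μ i)) := by
  intro s hs a ha
  have hμ_mem : μ ∈ Sk T1 T2 k :=
    (monotone_extSeq_iff h.le μ).mp (monotone_extSeq_of_le_succ fun i hi => (hμ i hi).le)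
  have hs_mono := (monotone_extSeq_iff h.le s).mpr hs
  refine ⟨(convex_Sk T1 T2 k).add_smul_sub_mem hμ_mem hs ha, ?_⟩
  simp only [DcGen, extSeq_add_mul_sub, add_sub_add_comm, ← mul_sub,
    sub_sub_sub_comm _ (extSeq _ _ _ μ _)]
  exact prod_div_rpow_le_prod_add_mul_sub_div_rpow _ _ _
    (fun i hi => sub_pos.mpr (hμ i (Nat.lt_succ_iff.mp (Finset.mem_range.mp hi))))
    (fun i _ => sub_nonneg.mpr (hs_mono (Nat.le_succ i))) (sub_pos.mpr h)
    (sum_range_extSeq_sub μ) (sum_range_extSeq_sub s) ha.1 ha.2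

theorem stmt11 (T1 T2 : ℝ) (h : T1 < T2) (k : ℕ) (hk : 1 ≤ k)
    (μ : Fin k → ℝ)
    (hμ : ∀ i ≤ k, extSeq T1 T2 k μ i < extSeq T1 T2 k μ (i + 1)) :
    ∀ s ∈ Sk T1 T2 k, ∀ a ∈ Set.Icc (0 : ℝ) 1,
      (fun i => μ i + a * (s i - μ i)) ∈ Sk T1 T2 k ∧
      DcGen T1 T2 k μ s ≤ DcGen T1 T2 k μ (fun i => μ i + a * (s i - μ i)) :=
  stmt11_general T1 T2 h k μ hμ
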